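/- Let (K, δ) be a differential field of characteristic p > 0 that is existentially closed in every differentially separable extension. Then (K, δ) is differentially perfect, i.e. C_K = K^p. -/

import Mathlib

set_option synthInstance.maxHeartbeats 1000000
set_option maxHeartbeats 1000000

noncomputable section

open MvPolynomial

universe u

variable {K : Type u} [Field K]

/-- Evaluation of a differential polynomial in `m` differential variables (variable
`(i, j)` standing for `δʲ xᵢ`) at a tuple `β` of a differential field extension. -/
def devalT {L : Type u} [Field L] [Algebra K L] (δL : Derivation ℤ L L) {m : ℕ}
    (β : Fin m → L) (f : MvPolynomial (Fin m × ℕ) K) : L :=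
  aeval (fun q : Fin m × ℕ => (⇑δL)^[q.2] (β q.1)) f

/-- `(L, δL)/(K, δ)` is differentially separable: for every `a ∈ L`, whenever the family
`(δʲ a)ⱼ` is algebraically dependent over `K`, it is separably dependent over `K`,
i.e. some algebraic relation has a nonvanishing partial derivative at the point. -/
def DiffSepExt {L : Type u} [Field L] [Algebra K L] (δL : Derivation ℤ L L) : Prop :=
  ∀ a : L,
    (∃ f : MvPolynomial ℕ K, f ≠ 0 ∧ aeval (fun j => (⇑δL)^[j] a) f = 0) →
    ∃ f : MvPolynomial ℕ K, aeval (fun j => (⇑δL)^[j] a) f = 0 ∧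
      ∃ i : ℕ, aeval (fun j => (⇑δL)^[j] a) (pderiv i f) ≠ 0

/-!
If a constant `b` had no `p`-th root in `K`, then `X ^ p - b` would be irreducible, and since
its coefficients are constants, `δ` extends coefficientwise to the field `L = K[X]/(X ^ p - b)`.
Every finite extension is differentially separable: the iterates `δʲ a` are `K`-linearly
dependent, and a nontrivial linear relation has a nonzero constant partial derivative. So `K` is
existentially closed in `L`, and the root of `x ^ p = b` in `L` yields one in `K`.
-/

open scoped Polynomial Differential

namespace AdjoinRoot

variable {A : Type*} [CommRing A] [Differential A] {q : A[X]}

theorem mk_mapCoeffs_eq_zero (hq : q ∣ Differential.mapCoeffs q) {f : A[X]} (hf : mk q f = 0) :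
    mk q (Differential.mapCoeffs f) = 0 := by
  rw [mk_eq_zero] at hf ⊢
  obtain ⟨g, rfl⟩ := hf
  rw [Derivation.leibniz, smul_eq_mul, smul_eq_mul]
  exact dvd_add (dvd_mul_right _ _) (dvd_mul_of_dvd_right hq _)

def liftMapCoeffs (hq : q ∣ Differential.mapCoeffs q) :
    Derivation ℤ (AdjoinRoot q) (AdjoinRoot q) :=
  Derivation.liftOfSurjective (f := (mk q).toIntAlgHom) mk_surjective
    (d := Differential.mapCoeffs) fun _ => mk_mapCoeffs_eq_zero hq

theorem liftMapCoeffs_mk (hq : q ∣ Differential.mapCoeffs q) (f : A[X]) :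
    liftMapCoeffs hq (mk q f) = mk q (Differential.mapCoeffs f) :=
  Derivation.liftOfSurjective_apply (f := (mk q).toIntAlgHom) _
    (fun _ => mk_mapCoeffs_eq_zero hq) f

theorem liftMapCoeffs_of (hq : q ∣ Differential.mapCoeffs q) (a : A) :
    liftMapCoeffs hq (of q a) = of q a′ := by
  rw [← mk_C, liftMapCoeffs_mk, Differential.mapCoeffs_C, mk_C]

end AdjoinRoot

theorem Differential.mapCoeffs_X_pow_sub_C {A : Type*} [CommRing A] [Differential A] (n : ℕ)
    {b : A} (hb : b′ = 0) : mapCoeffs (Polynomial.X ^ n - Polynomial.C b) = 0 := by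
  rw [map_sub, Derivation.leibniz_pow, mapCoeffs_X, mapCoeffs_C, hb]
  simp

theorem MvPolynomial.exists_aeval_eq_zero_aeval_pderiv_ne_zero {R L ι : Type*} [CommRing R]
    [CommRing L] [Algebra R L] [FaithfulSMul R L] {v : ι → L} (hv : ¬ LinearIndependent R v) :
    ∃ f : MvPolynomial ι R, aeval v f = 0 ∧ ∃ i, aeval v (pderiv i f) ≠ 0 := by
  classical
  obtain ⟨s, g, hrel, i, hi, hgi⟩ := not_linearIndependent_iff.mp hv
  refine ⟨∑ j ∈ s, C (g j) * X j, ?_, i, ?_⟩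
  · simpa [Algebra.smul_def] using hrel
  · have hpderiv : pderiv i (∑ j ∈ s, C (g j) * X j) = C (g i) := by
      simp [pderiv_X, Pi.single_apply, hi]
    rwa [hpderiv, aeval_C, ne_eq, FaithfulSMul.algebraMap_eq_zero_iff]

theorem diffSepExt_of_finite {L : Type u} [Field L] [Algebra K L] [Module.Finite K L]
    (δL : Derivation ℤ L L) : DiffSepExt (K := K) δL := fun _ _ =>
  MvPolynomial.exists_aeval_eq_zero_aeval_pderiv_ne_zero
    (Module.Finite.not_linearIndependent_of_infinite _)

theorem devalT_X_pow_sub_C {L : Type u} [Field L] [Algebra K L] (δL : Derivation ℤ L L) {m : ℕ}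
    (β : Fin m → L) (i : Fin m) (n : ℕ) (b : K) :
    devalT δL β (X (i, 0) ^ n - C b) = β i ^ n - algebraMap K L b := by
  simp [devalT]

theorem stmt17 (p : ℕ) [Fact p.Prime] (δ : Derivation ℤ K K)
    (hec : ∀ (L : Type u) [Field L] [Algebra K L] (δL : Derivation ℤ L L),
      (∀ a : K, δL (algebraMap K L a) = algebraMap K L (δ a)) →
      DiffSepExt (K := K) δL →
      ∀ (m r s : ℕ) (F : Fin r → MvPolynomial (Fin m × ℕ) K)
        (G : Fin s → MvPolynomial (Fin m × ℕ) K),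
        (∃ β : Fin m → L, (∀ k, devalT δL β (F k) = 0) ∧ ∀ k, devalT δL β (G k) ≠ 0) →
        ∃ α : Fin m → K, (∀ k, devalT δ α (F k) = 0) ∧ ∀ k, devalT δ α (G k) ≠ 0) :
    ∀ b : K, δ b = 0 → ∃ c : K, c ^ p = b := by
  intro b hb
  by_contra! hroot
  let _ : Differential K := ⟨δ⟩
  set q : K[X] := .X ^ p - .C b
  have hirr : Irreducible q := X_pow_sub_C_irreducible_of_prime Fact.out hroot
  have : Fact (Irreducible q) := ⟨hirr⟩
  have : Module.Finite K (AdjoinRoot q) := (AdjoinRoot.powerBasis hirr.ne_zero).finite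
  have hq : q ∣ Differential.mapCoeffs q := by
    rw [Differential.mapCoeffs_X_pow_sub_C p hb]
    exact dvd_zero q
  have hroot_pow : devalT (AdjoinRoot.liftMapCoeffs hq) (fun _ : Fin 1 => AdjoinRoot.root q)
      (X (0, 0) ^ p - C b) = 0 :=
    (devalT_X_pow_sub_C _ _ 0 p b).trans (sub_eq_zero.mpr (root_X_pow_sub_C_pow p b))
  obtain ⟨α, hα, -⟩ := hec (AdjoinRoot q) (AdjoinRoot.liftMapCoeffs hq)
    (AdjoinRoot.liftMapCoeffs_of hq) (diffSepExt_of_finite _) 1 1 0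
    (fun _ => X (0, 0) ^ p - C b) ![] ⟨_, fun _ => hroot_pow, fun k => k.elim0⟩
  exact hroot (α 0) (sub_eq_zero.mp ((devalT_X_pow_sub_C δ α 0 p b).symm.trans (hα 0)))
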